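/- arXiv:2503.18700 — 2 statements merged into one kernel-verified Lean document; each statement's English description precedes it below -/
import Mathlib

section
/- Let p, q be positive integers with p ≠ q. There is no embedding of the grid graph □_n into the (p,q)-leaper graph L_n for any n ≥ 2. -/
def gridAdj (a b : ℤ × ℤ) : Prop := |a.1 - b.1| + |a.2 - b.2| = 1

def leapAdj (p q : ℤ) (a b : ℤ × ℤ) : Prop :=
  (|a.1 - b.1| = p ∧ |a.2 - b.2| = q) ∨ (|a.1 - b.1| = q ∧ |a.2 - b.2| = p)

def box (n : ℕ) : Set (ℤ × ℤ) := {v | 1 ≤ v.1 ∧ v.1 ≤ (n : ℤ) ∧ 1 ≤ v.2 ∧ v.2 ≤ (n : ℤ)}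

lemma mem_box {n : ℕ} {v : ℤ × ℤ} :
    v ∈ box n ↔ (1 ≤ v.1 ∧ v.1 ≤ (n:ℤ) ∧ 1 ≤ v.2 ∧ v.2 ≤ (n:ℤ)) := Iff.rfl

lemma box_finite (n : ℕ) : (box n).Finite := by
  apply (Set.finite_Icc ((1:ℤ), (1:ℤ)) ((n:ℤ), (n:ℤ))).subset
  intro v hv
  rw [mem_box] at hv
  simp only [Set.mem_Icc, Prod.le_def]
  exact ⟨⟨hv.1, hv.2.2.1⟩, ⟨hv.2.1, hv.2.2.2⟩⟩

lemma gridAdj_mk {a b : ℤ × ℤ}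
    (h : (a.2 = b.2 ∧ (a.1 - b.1 = 1 ∨ b.1 - a.1 = 1)) ∨
         (a.1 = b.1 ∧ (a.2 - b.2 = 1 ∨ b.2 - a.2 = 1))) : gridAdj a b := by
  unfold gridAdj
  rcases h with ⟨h1, h2⟩ | ⟨h1, h2⟩
  · rw [h1, sub_self, abs_zero, add_zero, abs_eq (by norm_num : (0:ℤ) ≤ 1)]; omega
  · rw [h1, sub_self, abs_zero, zero_add, abs_eq (by norm_num : (0:ℤ) ≤ 1)]; omega

lemma leap_cases {p q : ℤ} (hp : 0 ≤ p) (hq : 0 ≤ q) {a b : ℤ × ℤ} (h : leapAdj p q a b) :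
    ((b.1 - a.1 = p ∨ b.1 - a.1 = -p) ∧ (b.2 - a.2 = q ∨ b.2 - a.2 = -q)) ∨
    ((b.1 - a.1 = q ∨ b.1 - a.1 = -q) ∧ (b.2 - a.2 = p ∨ b.2 - a.2 = -p)) := by
  rcases h with ⟨h1, h2⟩ | ⟨h1, h2⟩
  · rw [abs_eq hp] at h1; rw [abs_eq hq] at h2; omega
  · rw [abs_eq hq] at h1; rw [abs_eq hp] at h2; omega

set_option maxHeartbeats 1000000 in
lemma core {p q u1 u2 w1 w2 v1 v2 z1 z2 : ℤ} (hp : 0 < p) (hlt : p < q)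
 (hu : ((u1 = p ∨ u1 = -p) ∧ (u2 = q ∨ u2 = -q)) ∨ ((u1 = q ∨ u1 = -q) ∧ (u2 = p ∨ u2 = -p)))
 (hw : ((w1 = p ∨ w1 = -p) ∧ (w2 = q ∨ w2 = -q)) ∨ ((w1 = q ∨ w1 = -q) ∧ (w2 = p ∨ w2 = -p)))
 (hv : ((v1 = p ∨ v1 = -p) ∧ (v2 = q ∨ v2 = -q)) ∨ ((v1 = q ∨ v1 = -q) ∧ (v2 = p ∨ v2 = -p)))
 (hz : ((z1 = p ∨ z1 = -p) ∧ (z2 = q ∨ z2 = -q)) ∨ ((z1 = q ∨ z1 = -q) ∧ (z2 = p ∨ z2 = -p)))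
 (hs1 : u1 + w1 = v1 + z1) (hs2 : u2 + w2 = v2 + z2)
 (hne : ¬(u1 = v1 ∧ u2 = v2)) (hnz : ¬(u1 + w1 = 0 ∧ u2 + w2 = 0)) :
 z1 = u1 ∧ z2 = u2 := by
  rcases hu with ⟨rfl|rfl,rfl|rfl⟩|⟨rfl|rfl,rfl|rfl⟩ <;>
  rcases hw with ⟨rfl|rfl,rfl|rfl⟩|⟨rfl|rfl,rfl|rfl⟩ <;>
  rcases hv with ⟨rfl|rfl,rfl|rfl⟩|⟨rfl|rfl,rfl|rfl⟩ <;>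
  rcases hz with ⟨rfl|rfl,rfl|rfl⟩|⟨rfl|rfl,rfl|rfl⟩ <;> omega

theorem main {p q : ℤ} (hp : 0 < p) (hlt : p < q) (n : ℕ) (hn : 2 ≤ n) :
    ¬ ∃ f : ℤ × ℤ → ℤ × ℤ,
        (∀ v ∈ box n, f v ∈ box n) ∧
        Set.InjOn f (box n) ∧
        (∀ a ∈ box n, ∀ b ∈ box n, gridAdj a b → leapAdj p q (f a) (f b)) := by
  rintro ⟨f, hmaps, hinj, hadj⟩
  have hq : 0 < q := hp.trans hlt
  have hsurj : Set.SurjOn f (box n) (box n) :=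
    (((box_finite n).injOn_iff_bijOn_of_mapsTo hmaps).mp hinj).surjOn
  -- parallelogram law
  have para : ∀ x y : ℤ, 1 ≤ x → x + 1 ≤ (n:ℤ) → 1 ≤ y → y + 1 ≤ (n:ℤ) →
      f (x+1, y+1) = f (x+1, y) + f (x, y+1) - f (x, y) := by
    intro x y hx1 hxn hy1 hyn
    have hA : ((x,y) : ℤ×ℤ) ∈ box n := mem_box.mpr ⟨by omega, by omega, by omega, by omega⟩
    have hB : ((x+1,y) : ℤ×ℤ) ∈ box n := mem_box.mpr ⟨by omega, by omega, by omega, by omega⟩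
    have hC : ((x,y+1) : ℤ×ℤ) ∈ box n := mem_box.mpr ⟨by omega, by omega, by omega, by omega⟩
    have hD : ((x+1,y+1) : ℤ×ℤ) ∈ box n := mem_box.mpr ⟨by omega, by omega, by omega, by omega⟩
    have lAB := leap_cases hp.le hq.le (hadj _ hA _ hB (gridAdj_mk (by simp)))
    have lBD := leap_cases hp.le hq.le (hadj _ hB _ hD (gridAdj_mk (by simp)))
    have lAC := leap_cases hp.le hq.le (hadj _ hA _ hC (gridAdj_mk (by simp)))
    have lCD := leap_cases hp.le hq.le (hadj _ hC _ hD (gridAdj_mk (by simp)))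
    have hne : ¬((f (x+1,y)).1 - (f (x,y)).1 = (f (x,y+1)).1 - (f (x,y)).1 ∧
                 (f (x+1,y)).2 - (f (x,y)).2 = (f (x,y+1)).2 - (f (x,y)).2) := by
      rintro ⟨e1, e2⟩
      have : f (x+1,y) = f (x,y+1) := by
        have h1 : (f (x+1,y)).1 = (f (x,y+1)).1 := by omega
        have h2 : (f (x+1,y)).2 = (f (x,y+1)).2 := by omega
        exact Prod.ext h1 h2
      have := hinj hB hC this
      simp [Prod.ext_iff] at this
    have hnz : ¬(((f (x+1,y)).1 - (f (x,y)).1) + ((f (x+1,y+1)).1 - (f (x+1,y)).1) = 0 ∧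
                 ((f (x+1,y)).2 - (f (x,y)).2) + ((f (x+1,y+1)).2 - (f (x+1,y)).2) = 0) := by
      rintro ⟨e1, e2⟩
      have : f (x,y) = f (x+1,y+1) := by
        have h1 : (f (x,y)).1 = (f (x+1,y+1)).1 := by omega
        have h2 : (f (x,y)).2 = (f (x+1,y+1)).2 := by omega
        exact Prod.ext h1 h2
      have := hinj hA hD this
      simp [Prod.ext_iff] at this
    have hcore := core hp hlt lAB lBD lAC lCD (by ring) (by ring) hne hnz
    have h1 : (f (x+1,y+1)).1 = (f (x+1,y)).1 + (f (x,y+1)).1 - (f (x,y)).1 := by omega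
    have h2 : (f (x+1,y+1)).2 = (f (x+1,y)).2 + (f (x,y+1)).2 - (f (x,y)).2 := by omega
    exact Prod.ext (by simpa using h1) (by simpa using h2)
  -- decomposition  f (x,y) = f (x,1) + f (1,y) - f (1,1)
  have dec : ∀ y : ℤ, 1 ≤ y → y ≤ (n:ℤ) → ∀ x : ℤ, 1 ≤ x → x ≤ (n:ℤ) →
      f (x, y) = f (x, 1) + f (1, y) - f (1, 1) := by
    refine Int.le_induction ?_ ?_
    · intro _ x hx1 hx2; simp
    · intro y hy ih hyn
      have inner : ∀ x : ℤ, 1 ≤ x →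
          (x ≤ (n:ℤ) → f (x, y+1) = f (x, 1) + f (1, y+1) - f (1, 1)) := by
        refine Int.le_induction ?_ ?_
        · intro _; simp
        · intro x hx ihx hxn
          have hpar := para x y hx (by omega) hy (by omega)
          have e1 := ih (by omega) x hx (by omega)
          have e2 := ih (by omega) (x+1) (by omega) (by omega)
          have e3 := ihx (by omega)
          rw [hpar, e2, e3, e1]
          abel
      exact inner
  -- corner preimage lemma
  have corner : ∀ v : ℤ×ℤ, v ∈ box n → ∀ P1 P2 : ℤ×ℤ,
      (∀ w, w ∈ box n → leapAdj p q (f v) w → w = P1 ∨ w = P2) →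
      v.1 = 1 ∨ v.1 = (n:ℤ) := by
    intro v hvbox P1 P2 hP
    by_contra hcon
    push_neg at hcon
    have hv := mem_box.mp hvbox
    obtain ⟨y', hy'1, hy'n, hy'd⟩ : ∃ y', 1 ≤ y' ∧ y' ≤ (n:ℤ) ∧ (y' = v.2 + 1 ∨ y' = v.2 - 1) := by
      by_cases hc : v.2 < (n:ℤ)
      · exact ⟨v.2+1, by omega, by omega, Or.inl rfl⟩
      · exact ⟨v.2-1, by omega, by omega, Or.inr rfl⟩
    have hm1 : ((v.1 - 1, v.2) : ℤ×ℤ) ∈ box n := mem_box.mpr ⟨by omega, by omega, by omega, by omega⟩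
    have hm2 : ((v.1 + 1, v.2) : ℤ×ℤ) ∈ box n := mem_box.mpr ⟨by omega, by omega, by omega, by omega⟩
    have hm3 : ((v.1, y') : ℤ×ℤ) ∈ box n := mem_box.mpr ⟨by omega, by omega, by omega, by omega⟩
    have g1 : gridAdj v (v.1 - 1, v.2) :=
      gridAdj_mk (Or.inl ⟨rfl, Or.inl (show v.1 - (v.1-1) = 1 by omega)⟩)
    have g2 : gridAdj v (v.1 + 1, v.2) :=
      gridAdj_mk (Or.inl ⟨rfl, Or.inr (show (v.1+1) - v.1 = 1 by omega)⟩)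
    have g3 : gridAdj v (v.1, y') :=
      gridAdj_mk (Or.inr ⟨rfl, show v.2 - y' = 1 ∨ y' - v.2 = 1 by omega⟩)
    have e1 := hP _ (hmaps _ hm1) (hadj _ hvbox _ hm1 g1)
    have e2 := hP _ (hmaps _ hm2) (hadj _ hvbox _ hm2 g2)
    have e3 := hP _ (hmaps _ hm3) (hadj _ hvbox _ hm3 g3)
    have ne12 : f (v.1-1, v.2) ≠ f (v.1+1, v.2) := fun h => by
      have := hinj hm1 hm2 h; simp [Prod.ext_iff] at this; omega
    have ne13 : f (v.1-1, v.2) ≠ f (v.1, y') := fun h => by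
      have := hinj hm1 hm3 h; simp [Prod.ext_iff] at this
    have ne23 : f (v.1+1, v.2) ≠ f (v.1, y') := fun h => by
      have := hinj hm2 hm3 h; simp [Prod.ext_iff] at this
    rcases e1 with e1|e1 <;> rcases e2 with e2|e2 <;> rcases e3 with e3|e3 <;>
      first
        | exact ne12 (e1.trans e2.symm)
        | exact ne13 (e1.trans e3.symm)
        | exact ne23 (e2.trans e3.symm)
  -- characterization of neighbours of the three corners
  have char11 : ∀ w, w ∈ box n → leapAdj p q ((1:ℤ),(1:ℤ)) w →
      w = (1+p, 1+q) ∨ w = (1+q, 1+p) := by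
    intro w hw hl
    have H : ((w.1 - 1 = p ∨ w.1 - 1 = -p) ∧ (w.2 - 1 = q ∨ w.2 - 1 = -q)) ∨
             ((w.1 - 1 = q ∨ w.1 - 1 = -q) ∧ (w.2 - 1 = p ∨ w.2 - 1 = -p)) := by
      simpa using leap_cases hp.le hq.le hl
    have hw' := mem_box.mp hw
    simp only [Prod.ext_iff]
    omega
  have char1n : ∀ w, w ∈ box n → leapAdj p q ((1:ℤ),(n:ℤ)) w →
      w = (1+p, (n:ℤ)-q) ∨ w = (1+q, (n:ℤ)-p) := by
    intro w hw hl
    have H : ((w.1 - 1 = p ∨ w.1 - 1 = -p) ∧ (w.2 - n = q ∨ w.2 - n = -q)) ∨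
             ((w.1 - 1 = q ∨ w.1 - 1 = -q) ∧ (w.2 - n = p ∨ w.2 - n = -p)) := by
      simpa using leap_cases hp.le hq.le hl
    have hw' := mem_box.mp hw
    simp only [Prod.ext_iff]
    omega
  have charnn : ∀ w, w ∈ box n → leapAdj p q (((n:ℤ)),(n:ℤ)) w →
      w = ((n:ℤ)-p, (n:ℤ)-q) ∨ w = ((n:ℤ)-q, (n:ℤ)-p) := by
    intro w hw hl
    have H : ((w.1 - n = p ∨ w.1 - n = -p) ∧ (w.2 - n = q ∨ w.2 - n = -q)) ∨
             ((w.1 - n = q ∨ w.1 - n = -q) ∧ (w.2 - n = p ∨ w.2 - n = -p)) := by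
      simpa using leap_cases hp.le hq.le hl
    have hw' := mem_box.mp hw
    simp only [Prod.ext_iff]
    omega
  -- basic box memberships
  have h11 : ((1:ℤ),(1:ℤ)) ∈ box n := mem_box.mpr ⟨by omega, by omega, by omega, by omega⟩
  have h21 : ((2:ℤ),(1:ℤ)) ∈ box n := mem_box.mpr ⟨by omega, by omega, by omega, by omega⟩
  have h1n : ((1:ℤ),(n:ℤ)) ∈ box n := mem_box.mpr ⟨by omega, by omega, by omega, by omega⟩
  have hnn : (((n:ℤ)),(n:ℤ)) ∈ box n := mem_box.mpr ⟨by omega, by omega, by omega, by omega⟩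
  -- preimages of the three corners
  obtain ⟨⟨x₀, y₀⟩, hm₀, he₀⟩ := hsurj h11
  obtain ⟨⟨x₂, y₂⟩, hm₂, he₂⟩ := hsurj hnn
  obtain ⟨⟨x₁, y₁⟩, hm₁, he₁⟩ := hsurj h1n
  have hb₀ := mem_box.mp hm₀
  have hb₂ := mem_box.mp hm₂
  have hb₁ := mem_box.mp hm₁
  simp only at hb₀ hb₂ hb₁
  -- min/max properties along the first row
  have amin : ∀ x : ℤ, 1 ≤ x → x ≤ (n:ℤ) →
      (f (x₀,1)).1 ≤ (f (x,1)).1 ∧ (f (x₀,1)).2 ≤ (f (x,1)).2 := by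
    intro x hx1 hxn
    have hm : ((x, y₀) : ℤ×ℤ) ∈ box n := mem_box.mpr ⟨by omega, by omega, by omega, by omega⟩
    have him := mem_box.mp (hmaps _ hm)
    have E := dec y₀ (by omega) (by omega) x hx1 hxn
    have E0 := dec y₀ (by omega) (by omega) x₀ (by omega) (by omega)
    rw [he₀] at E0
    have E1 : (f (x,y₀)).1 = (f (x,1)).1 + (f (1,y₀)).1 - (f (1,1)).1 := congrArg Prod.fst E
    have E2 : (f (x,y₀)).2 = (f (x,1)).2 + (f (1,y₀)).2 - (f (1,1)).2 := congrArg Prod.snd E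
    have F1 : (1:ℤ) = (f (x₀,1)).1 + (f (1,y₀)).1 - (f (1,1)).1 := congrArg Prod.fst E0
    have F2 : (1:ℤ) = (f (x₀,1)).2 + (f (1,y₀)).2 - (f (1,1)).2 := congrArg Prod.snd E0
    constructor <;> omega
  have amax : ∀ x : ℤ, 1 ≤ x → x ≤ (n:ℤ) →
      (f (x,1)).1 ≤ (f (x₂,1)).1 ∧ (f (x,1)).2 ≤ (f (x₂,1)).2 := by
    intro x hx1 hxn
    have hm : ((x, y₂) : ℤ×ℤ) ∈ box n := mem_box.mpr ⟨by omega, by omega, by omega, by omega⟩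
    have him := mem_box.mp (hmaps _ hm)
    have E := dec y₂ (by omega) (by omega) x hx1 hxn
    have E0 := dec y₂ (by omega) (by omega) x₂ (by omega) (by omega)
    rw [he₂] at E0
    have E1 : (f (x,y₂)).1 = (f (x,1)).1 + (f (1,y₂)).1 - (f (1,1)).1 := congrArg Prod.fst E
    have E2 : (f (x,y₂)).2 = (f (x,1)).2 + (f (1,y₂)).2 - (f (1,1)).2 := congrArg Prod.snd E
    have F1 : ((n:ℤ):ℤ) = (f (x₂,1)).1 + (f (1,y₂)).1 - (f (1,1)).1 := congrArg Prod.fst E0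
    have F2 : ((n:ℤ):ℤ) = (f (x₂,1)).2 + (f (1,y₂)).2 - (f (1,1)).2 := congrArg Prod.snd E0
    constructor <;> omega
  have amix : ∀ x : ℤ, 1 ≤ x → x ≤ (n:ℤ) →
      (f (x₁,1)).1 ≤ (f (x,1)).1 ∧ (f (x,1)).2 ≤ (f (x₁,1)).2 := by
    intro x hx1 hxn
    have hm : ((x, y₁) : ℤ×ℤ) ∈ box n := mem_box.mpr ⟨by omega, by omega, by omega, by omega⟩
    have him := mem_box.mp (hmaps _ hm)
    have E := dec y₁ (by omega) (by omega) x hx1 hxn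
    have E0 := dec y₁ (by omega) (by omega) x₁ (by omega) (by omega)
    rw [he₁] at E0
    have E1 : (f (x,y₁)).1 = (f (x,1)).1 + (f (1,y₁)).1 - (f (1,1)).1 := congrArg Prod.fst E
    have E2 : (f (x,y₁)).2 = (f (x,1)).2 + (f (1,y₁)).2 - (f (1,1)).2 := congrArg Prod.snd E
    have F1 : (1:ℤ) = (f (x₁,1)).1 + (f (1,y₁)).1 - (f (1,1)).1 := congrArg Prod.fst E0
    have F2 : ((n:ℤ):ℤ) = (f (x₁,1)).2 + (f (1,y₁)).2 - (f (1,1)).2 := congrArg Prod.snd E0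
    constructor <;> omega
  -- nondegeneracy: the first step along the first row moves both coordinates
  have hstep : ((f (2,1)).1 - (f (1,1)).1 = p ∨ (f (2,1)).1 - (f (1,1)).1 = -p ∨
                (f (2,1)).1 - (f (1,1)).1 = q ∨ (f (2,1)).1 - (f (1,1)).1 = -q) ∧
               ((f (2,1)).2 - (f (1,1)).2 = p ∨ (f (2,1)).2 - (f (1,1)).2 = -p ∨
                (f (2,1)).2 - (f (1,1)).2 = q ∨ (f (2,1)).2 - (f (1,1)).2 = -q) := by
    have H := leap_cases hp.le hq.le
      (hadj _ h11 _ h21 (gridAdj_mk (Or.inl ⟨rfl, Or.inr (by norm_num)⟩)))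
    constructor <;> omega
  -- corner preimages have extreme first coordinate
  have c₀ : x₀ = 1 ∨ x₀ = (n:ℤ) :=
    corner _ hm₀ _ _ (fun w hw hl => char11 w hw (by rwa [he₀] at hl))
  have c₂ : x₂ = 1 ∨ x₂ = (n:ℤ) :=
    corner _ hm₂ _ _ (fun w hw hl => charnn w hw (by rwa [he₂] at hl))
  have c₁ : x₁ = 1 ∨ x₁ = (n:ℤ) :=
    corner _ hm₁ _ _ (fun w hw hl => char1n w hw (by rwa [he₁] at hl))
  -- final pigeonhole
  have i1 := amin 1 (by omega) (by omega)
  have i2 := amin 2 (by omega) (by omega)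
  have j1 := amax 1 (by omega) (by omega)
  have j2 := amax 2 (by omega) (by omega)
  have k1 := amix 1 (by omega) (by omega)
  have k2 := amix 2 (by omega) (by omega)
  have htri : x₀ = x₂ ∨ x₀ = x₁ ∨ x₂ = x₁ := by omega
  rcases htri with e|e|e
  · rw [e] at i1 i2
    omega
  · rw [e] at i1 i2
    omega
  · rw [e] at j1 j2
    omega

/-- There is no embedding of the grid graph `□_n` into the `(p,q)`-leaper graph `L_n`
for `n ≥ 2`, where `p, q` are positive and distinct. -/
theorem no_perfect_leaper_embedding (p q : ℤ) (hp : 0 < p) (hq : 0 < q) (hpq : p ≠ q)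
    (n : ℕ) (hn : 2 ≤ n) :
    ¬ ∃ f : ℤ × ℤ → ℤ × ℤ,
        (∀ v ∈ box n, f v ∈ box n) ∧
        Set.InjOn f (box n) ∧
        (∀ a ∈ box n, ∀ b ∈ box n, gridAdj a b → leapAdj p q (f a) (f b)) := by
  rcases lt_or_gt_of_ne hpq with h | h
  · exact main hp h n hn
  · rintro ⟨f, h1, h2, h3⟩
    exact main hq h n hn ⟨f, h1, h2, fun a ha b hb g => Or.symm (h3 a ha b hb g)⟩
end

section
/- (Discrete universal chord theorem) Let G be a finite connected subgraph of the infinite grid graph on ℤ², let u be an integer vector, and let n be a positive integer. If G realises n·u, then G realises u. -/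
def realises (S : Finset (ℤ × ℤ)) (v : ℤ × ℤ) : Prop := ∃ a ∈ S, ∃ b ∈ S, a - b = v

def connectedIn (S : Finset (ℤ × ℤ)) : Prop :=
  ∀ a ∈ S, ∀ b ∈ S, Relation.ReflTransGen (fun x y => x ∈ S ∧ y ∈ S ∧ gridAdj x y) a b

/-!
Join the two points of `S` that differ by `n • u` by a path in `S`. A shortest subpath whose
endpoints differ by a nonzero multiple `k • u` has `|k| ≥ 2`, since `S` does not realise `u`, and no
two of its points other than the endpoints differ by a nonzero multiple of `u`. Repeating it
periodically gives a bi-infinite grid path `Q` with `Q (t + L) = Q t + k • u` that never meets its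
translate `Q + u`, which is impossible.

Indeed, after a symmetry of the grid `u` points upwards, so `Q` crosses every horizontal line with
signed crossing number `1`. The signed number of crossings of `Q` with a horizontal ray pointing
right is constant along `Q + u`, because that path never meets `Q`. But on some horizontal line a
crossing of `Q + u` lies strictly left of all crossings of `Q` (the ray count there is `1`), and on
another one strictly right of all of them (the ray count is `0`): otherwise the leftmost crossing of
`Q` on a line would move strictly left at each translation by `u`, while `k` translations map the
crossings of `Q` onto themselves.
-/

open Filter Function

section Telescoping

variable {G : Type*} [AddCommGroup G]

lemma Int.sum_Ico_sub (φ : ℤ → G) {a b : ℤ} (hab : a ≤ b) :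
    ∑ t ∈ Finset.Ico a b, (φ (t + 1) - φ t) = φ b - φ a := by
  induction b, hab using Int.leInduction with
  | base => simp
  | succ b hab ih => rw [← Finset.sum_Ico_add_eq_sum_Ico_add_one hab, ih]; abel

variable {φ : ℤ → G} {lo hi : G}

lemma exists_support_sub_subset_Ico (hlo : ∀ᶠ t in atBot, φ t = lo)
    (hhi : ∀ᶠ t in atTop, φ t = hi) :
    ∃ a b, a ≤ b ∧ φ a = lo ∧ φ b = hi ∧
      support (fun t => φ (t + 1) - φ t) ⊆ Finset.Ico a b := by
  obtain ⟨a, ha⟩ := eventually_atBot.1 hlo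
  obtain ⟨b, hb⟩ := eventually_atTop.1 hhi
  refine ⟨min a b, max a b, min_le_max, ha _ (min_le_left a b), hb _ (le_max_right a b),
    fun t ht => ?_⟩
  rw [Finset.coe_Ico, Set.mem_Ico]
  by_contra hout
  refine ht ?_
  rcases not_and_or.1 hout with hlt | hge
  · simp only [ha t (by omega), ha (t + 1) (by omega), sub_self]
  · simp only [hb t (by omega), hb (t + 1) (by omega), sub_self]

lemma hasFiniteSupport_sub_of_eventually (hlo : ∀ᶠ t in atBot, φ t = lo)
    (hhi : ∀ᶠ t in atTop, φ t = hi) : HasFiniteSupport fun t => φ (t + 1) - φ t := by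
  obtain ⟨a, b, -, -, -, hsupp⟩ := exists_support_sub_subset_Ico hlo hhi
  exact (Finset.Ico a b).finite_toSet.subset hsupp

lemma finsum_sub_of_eventually (hlo : ∀ᶠ t in atBot, φ t = lo)
    (hhi : ∀ᶠ t in atTop, φ t = hi) : ∑ᶠ t, (φ (t + 1) - φ t) = hi - lo := by
  obtain ⟨a, b, hab, rfl, rfl, hsupp⟩ := exists_support_sub_subset_Ico hlo hhi
  rw [finsum_eq_sum_of_support_subset _ hsupp, Int.sum_Ico_sub φ hab]

end Telescoping

lemma tendsto_atTop_of_add_period {h : ℤ → ℤ} {M c : ℤ} (hM : 0 < M) (hc : 0 < c)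
    (hper : ∀ t, h (t + M) = h t + c) : Tendsto h atTop atTop := by
  have hshift : ∀ r n : ℤ, h (r + n * M) = h r + n * c := by
    intro r n
    induction n using Int.induction_on with
    | zero => simp
    | succ n ih => rw [add_mul, one_mul, ← add_assoc, hper, ih]; ring
    | pred n ih =>
      have := hper (r + (-n - 1) * M)
      rw [show r + (-n - 1) * M + M = r + -n * M by ring, ih] at this
      linarith
  obtain ⟨m, hm⟩ := ((Set.finite_Ico 0 M).image h).bddBelow
  have hbound : ∀ t, m + t / M * c ≤ h t := by
    intro t
    have hm' : m ≤ h (t % M) :=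
      hm ⟨t % M, ⟨Int.emod_nonneg t hM.ne', Int.emod_lt_of_pos t hM⟩, rfl⟩
    have := hshift (t % M) (t / M)
    rw [mul_comm (t / M), Int.emod_add_mul_ediv] at this
    linarith
  refine tendsto_atTop_atTop.2 fun b => ⟨|b - m| * M, fun t ht => ?_⟩
  have hq : |b - m| ≤ t / M := (Int.le_ediv_iff_mul_le hM).2 ht
  have hqc : t / M ≤ t / M * c := le_mul_of_one_le_right ((abs_nonneg _).trans hq) hc
  linarith [hbound t, le_abs_self (b - m)]

lemma tendsto_atBot_of_add_period {h : ℤ → ℤ} {M c : ℤ} (hM : 0 < M) (hc : 0 < c)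
    (hper : ∀ t, h (t + M) = h t + c) : Tendsto h atBot atBot := by
  have hrefl : Tendsto (fun t => -h (-t)) atTop atTop :=
    tendsto_atTop_of_add_period hM hc fun t => by
      have := hper (-(t + M))
      rw [show -(t + M) + M = -t by ring] at this
      linarith
  convert tendsto_neg_atTop_atBot.comp (hrefl.comp tendsto_neg_atBot_atTop) using 1
  ext t; simp

lemma exists_mem_add_lt_of_periodic {A : Set (ℤ × ℤ)} {v : ℤ × ℤ} {k ε : ℤ} (hk : 0 < k)
    (hε : ε ≠ 0) (hrow : ∀ b, {c | (c, b) ∈ A}.Finite) (hne : A.Nonempty)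
    (hper : ∀ x ∈ A, x - k • v ∈ A) (hdisj : ∀ x ∈ A, x + v ∉ A) :
    ∃ x ∈ A, ∀ c, (c, x.2 + v.2) ∈ A → ε * (x.1 + v.1) < ε * c := by
  by_contra! H
  have hstep : ∀ x ∈ A, ∃ y ∈ A, y.2 = x.2 + v.2 ∧ ε * y.1 < ε * (x.1 + v.1) := fun x hx => by
    obtain ⟨c, hc, hle⟩ := H x hx
    refine ⟨_, hc, rfl, hle.lt_of_ne fun h => hdisj x hx ?_⟩
    rwa [mul_left_cancel₀ hε h] at hc
  have hiter : ∀ n : ℤ, 0 ≤ n → ∀ x ∈ A,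
      ∃ y ∈ A, y.2 = x.2 + n * v.2 ∧ ε * y.1 + n ≤ ε * (x.1 + n * v.1) := by
    intro n hn
    induction n, hn using Int.leInduction with
    | base => exact fun x hx => ⟨x, hx, by simp, by simp⟩
    | succ n _ ih =>
      intro x hx
      obtain ⟨y, hy, hy2, hy1⟩ := ih x hx
      obtain ⟨z, hz, hz2, hz1⟩ := hstep y hy
      exact ⟨z, hz, by rw [hz2, hy2]; ring, by linarith⟩
  obtain ⟨x₀, hx₀⟩ := hne
  obtain ⟨c, hc, hmin⟩ := Set.exists_min_image _ (ε * ·) (hrow x₀.2) ⟨x₀.1, hx₀⟩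
  obtain ⟨y, hy, hy2, hy1⟩ := hiter k hk.le _ hc
  have hlow : y.1 - k * v.1 ∈ {c | (c, x₀.2) ∈ A} := by
    have hyv : y - k • v = (y.1 - k * v.1, x₀.2) := by ext <;> simp [hy2]
    show (_, _) ∈ A
    rw [← hyv]
    exact hper y hy
  have := hmin _ hlow
  linarith

lemma gridAdj_iff {a b : ℤ × ℤ} :
    gridAdj a b ↔ (a.1 = b.1 + 1 ∨ b.1 = a.1 + 1) ∧ a.2 = b.2 ∨
      a.1 = b.1 ∧ (a.2 = b.2 + 1 ∨ b.2 = a.2 + 1) := by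
  unfold gridAdj
  rcases abs_cases (a.1 - b.1) with ⟨h1, _⟩ | ⟨h1, _⟩ <;>
    rcases abs_cases (a.2 - b.2) with ⟨h2, _⟩ | ⟨h2, _⟩ <;> omega

lemma gridAdj_add_right {a b : ℤ × ℤ} (c : ℤ × ℤ) : gridAdj (a + c) (b + c) ↔ gridAdj a b := by
  simp only [gridAdj, Prod.fst_add, Prod.snd_add, add_sub_add_right_eq_sub]

lemma gridAdj_neg {a b : ℤ × ℤ} : gridAdj (-a) (-b) ↔ gridAdj a b := by
  simp only [gridAdj, Prod.fst_neg, Prod.snd_neg, neg_sub_neg, abs_sub_comm]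

lemma gridAdj_swap {a b : ℤ × ℤ} : gridAdj a.swap b.swap ↔ gridAdj a b := by
  simp only [gridAdj, Prod.fst_swap, Prod.snd_swap, add_comm]

section Crossings

variable (Q : ℤ → ℤ × ℤ)

/- `levelCrossing Q b t` is `1` (resp. `-1`) when the step from `Q t` to `Q (t + 1)` crosses the
line `y = b + 1/2` upwards (resp. downwards), and `rayCrossing Q x` counts these crossings on the
ray from `(x.1 - 1/2, x.2 + 1/2)` to the right. A point `(c, b)` of `crossingSet Q` records that
`Q` crosses `y = b + 1/2` along the edge from `(c, b)` to `(c, b + 1)`. -/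

def levelCrossing (b t : ℤ) : ℤ :=
  (if b < (Q (t + 1)).2 then 1 else 0) - if b < (Q t).2 then 1 else 0

noncomputable def rayCrossing (x : ℤ × ℤ) : ℤ :=
  ∑ᶠ t, if x.1 ≤ (Q t).1 then levelCrossing Q x.2 t else 0

def crossingSet : Set (ℤ × ℤ) :=
  {x | ∃ t, levelCrossing Q x.2 t ≠ 0 ∧ (Q t).1 = x.1}

variable {Q}

lemma levelCrossing_ne_zero (hadj : ∀ t, gridAdj (Q t) (Q (t + 1))) {b t : ℤ}
    (h : levelCrossing Q b t ≠ 0) :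
    (Q (t + 1)).1 = (Q t).1 ∧ ((Q t).2 = b ∧ (Q (t + 1)).2 = b + 1 ∨
      (Q t).2 = b + 1 ∧ (Q (t + 1)).2 = b) := by
  have := gridAdj_iff.1 (hadj t)
  unfold levelCrossing at h
  split_ifs at h <;> omega

lemma exists_eq_of_mem_crossingSet (hadj : ∀ t, gridAdj (Q t) (Q (t + 1))) {x : ℤ × ℤ}
    (hx : x ∈ crossingSet Q) : ∃ s, Q s = x := by
  obtain ⟨t, hne, hcol⟩ := hx
  obtain ⟨hvert, ⟨hrow, -⟩ | ⟨-, hrow⟩⟩ := levelCrossing_ne_zero hadj hne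
  · exact ⟨t, Prod.ext hcol hrow⟩
  · exact ⟨t + 1, Prod.ext (hvert.trans hcol) hrow⟩

lemma mem_crossingSet_of_ne_zero {b t : ℤ} (h : levelCrossing Q b t ≠ 0) :
    ((Q t).1, b) ∈ crossingSet Q :=
  ⟨t, h, rfl⟩

lemma rayCrossing_eq_zero {x : ℤ × ℤ} (h : ∀ c, (c, x.2) ∈ crossingSet Q → c < x.1) :
    rayCrossing Q x = 0 := by
  refine finsum_eq_zero_of_forall_eq_zero fun t => ?_
  by_cases ht : levelCrossing Q x.2 t = 0
  · simp [ht]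
  · rw [if_neg (h _ (mem_crossingSet_of_ne_zero ht)).not_ge]

lemma rayCrossing_eq_of_forall_ne (hadj : ∀ t, gridAdj (Q t) (Q (t + 1))) {a b : ℤ}
    (h : ∀ s, Q s ≠ (a, b)) : rayCrossing Q (a, b) = rayCrossing Q (a + 1, b) := by
  refine finsum_congr fun t => ?_
  by_cases ht : levelCrossing Q b t = 0
  · simp [ht]
  · have hcol : (Q t).1 ≠ a := fun hcol => by
      obtain ⟨s, hs⟩ := exists_eq_of_mem_crossingSet hadj (mem_crossingSet_of_ne_zero ht)
      exact h s (hs.trans (by rw [hcol]))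
    simp only [if_congr (show a ≤ (Q t).1 ↔ a + 1 ≤ (Q t).1 by omega) rfl rfl]

lemma sub_mem_crossingSet {M : ℤ} {v : ℤ × ℤ} (hper : ∀ t, Q (t + M) = Q t + v) {x : ℤ × ℤ}
    (hx : x ∈ crossingSet Q) : x - v ∈ crossingSet Q := by
  obtain ⟨t, ht, hcol⟩ := hx
  have hback : ∀ s, Q (s - M) = Q s - v := fun s => by
    rw [eq_sub_iff_add_eq, ← hper, sub_add_cancel]
  refine ⟨t - M, ?_, by simp [hback, hcol]⟩
  simpa [levelCrossing, sub_add_eq_add_sub, hback] using ht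

variable (htop : Tendsto (fun t => (Q t).2) atTop atTop)
  (hbot : Tendsto (fun t => (Q t).2) atBot atBot)
include htop hbot

lemma eventually_ite_lt_snd (b : ℤ) :
    (∀ᶠ t in atBot, (if b < (Q t).2 then 1 else 0 : ℤ) = 0) ∧
      ∀ᶠ t in atTop, (if b < (Q t).2 then 1 else 0 : ℤ) = 1 :=
  ⟨(hbot.eventually_le_atBot b).mono fun _ ht => if_neg ht.not_gt,
    (htop.eventually_gt_atTop b).mono fun _ ht => if_pos ht⟩

lemma hasFiniteSupport_levelCrossing (b : ℤ) : HasFiniteSupport (levelCrossing Q b) :=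
  hasFiniteSupport_sub_of_eventually (eventually_ite_lt_snd htop hbot b).1
    (eventually_ite_lt_snd htop hbot b).2

lemma finsum_levelCrossing (b : ℤ) : ∑ᶠ t, levelCrossing Q b t = 1 :=
  (finsum_sub_of_eventually (eventually_ite_lt_snd htop hbot b).1
    (eventually_ite_lt_snd htop hbot b).2).trans (sub_zero 1)

lemma hasFiniteSupport_rayCrossing (x : ℤ × ℤ) :
    HasFiniteSupport fun t => if x.1 ≤ (Q t).1 then levelCrossing Q x.2 t else 0 :=
  (hasFiniteSupport_levelCrossing htop hbot x.2).subset fun t ht => by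
    by_contra h
    exact ht (by simp [show levelCrossing Q x.2 t = 0 by simpa using h])

lemma crossingSet_nonempty : (crossingSet Q).Nonempty := by
  by_contra h
  have hzero : ∀ t, levelCrossing Q 0 t = 0 := fun t => by
    by_contra ht
    exact h ⟨_, mem_crossingSet_of_ne_zero ht⟩
  simpa [hzero] using finsum_levelCrossing htop hbot 0

lemma finite_row_crossingSet (b : ℤ) : {c | (c, b) ∈ crossingSet Q}.Finite := by
  refine ((hasFiniteSupport_levelCrossing htop hbot b).image fun t => (Q t).1).subset ?_
  rintro c ⟨t, ht, hc⟩
  exact ⟨t, ht, hc⟩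

lemma rayCrossing_eq_one {x : ℤ × ℤ} (h : ∀ c, (c, x.2) ∈ crossingSet Q → x.1 ≤ c) :
    rayCrossing Q x = 1 := by
  rw [rayCrossing, ← finsum_levelCrossing htop hbot x.2]
  refine finsum_congr fun t => ?_
  by_cases ht : levelCrossing Q x.2 t = 0
  · simp [ht]
  · rw [if_pos (h _ (mem_crossingSet_of_ne_zero ht))]

lemma rayCrossing_eq_of_forall_ne_succ (hadj : ∀ t, gridAdj (Q t) (Q (t + 1))) {a b : ℤ}
    (h : ∀ s, Q s ≠ (a, b + 1)) : rayCrossing Q (a, b) = rayCrossing Q (a, b + 1) := by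
  -- The two rays differ by the steps of `Q` entering or leaving row `b + 1` right of column
  -- `a - 1/2`; these telescope, since a horizontal step across that column would visit `(a, b + 1)`.
  set ψ : ℤ → ℤ := fun s => if a ≤ (Q s).1 ∧ (Q s).2 = b + 1 then 1 else 0
  have hψ : ∀ t, ((if a ≤ (Q t).1 then levelCrossing Q b t else 0) -
      if a ≤ (Q t).1 then levelCrossing Q (b + 1) t else 0) = ψ (t + 1) - ψ t := fun t => by
    have hstep := gridAdj_iff.1 (hadj t)
    have h0 := h t
    have h1 := h (t + 1)
    simp only [ne_eq, Prod.ext_iff, not_and] at h0 h1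
    simp only [ψ, levelCrossing]
    split_ifs <;> omega
  have hlo : ∀ᶠ t in atBot, ψ t = 0 :=
    (hbot.eventually_lt_atBot (b + 1)).mono fun _ ht => if_neg fun h => ht.ne h.2
  have hhi : ∀ᶠ t in atTop, ψ t = 0 :=
    (htop.eventually_gt_atTop (b + 1)).mono fun _ ht => if_neg fun h => ht.ne' h.2
  rw [← sub_eq_zero, rayCrossing, rayCrossing,
    ← finsum_sub_distrib (hasFiniteSupport_rayCrossing htop hbot _)
      (hasFiniteSupport_rayCrossing htop hbot _), finsum_congr hψ,
    finsum_sub_of_eventually hlo hhi, sub_self]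

lemma rayCrossing_eq_of_gridAdj (hadj : ∀ t, gridAdj (Q t) (Q (t + 1))) {x y : ℤ × ℤ}
    (hxy : gridAdj x y) (hx : ∀ s, Q s ≠ x) (hy : ∀ s, Q s ≠ y) :
    rayCrossing Q x = rayCrossing Q y := by
  obtain ⟨a, b⟩ := x
  obtain ⟨c, d⟩ := y
  rcases gridAdj_iff.1 hxy with ⟨h1 | h1, h2⟩ | ⟨h1, h2 | h2⟩ <;> dsimp only at h1 h2 <;>
    subst h1 h2
  · exact (rayCrossing_eq_of_forall_ne hadj hy).symm
  · exact rayCrossing_eq_of_forall_ne hadj hx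
  · exact (rayCrossing_eq_of_forall_ne_succ htop hbot hadj hx).symm
  · exact rayCrossing_eq_of_forall_ne_succ htop hbot hadj hy

lemma rayCrossing_add_eq (hadj : ∀ t, gridAdj (Q t) (Q (t + 1))) {u : ℤ × ℤ}
    (hdisj : ∀ s t, Q s ≠ Q t + u) (t : ℤ) :
    rayCrossing Q (Q t + u) = rayCrossing Q (Q 0 + u) := by
  have hstep : ∀ t, rayCrossing Q (Q t + u) = rayCrossing Q (Q (t + 1) + u) := fun t =>
    rayCrossing_eq_of_gridAdj htop hbot hadj ((gridAdj_add_right u).2 (hadj t))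
      (fun s => hdisj s t) (fun s => hdisj s (t + 1))
  induction t using Int.induction_on with
  | zero => rfl
  | succ n ih => rw [← hstep, ih]
  | pred n ih => rw [hstep, sub_add_cancel, ih]

end Crossings

theorem exists_eq_add_of_periodic_of_snd_pos {Q : ℤ → ℤ × ℤ} {M k : ℤ} {u : ℤ × ℤ} (hM : 0 < M)
    (hk : 0 < k) (hu : 0 < u.2) (hadj : ∀ t, gridAdj (Q t) (Q (t + 1)))
    (hper : ∀ t, Q (t + M) = Q t + k • u) : ∃ s t, Q s = Q t + u := by
  by_contra! hdisj
  have hheight : ∀ t, (Q (t + M)).2 = (Q t).2 + k * u.2 := fun t => by simp [hper]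
  have htop := tendsto_atTop_of_add_period (h := fun t => (Q t).2) hM (mul_pos hk hu) hheight
  have hbot := tendsto_atBot_of_add_period (h := fun t => (Q t).2) hM (mul_pos hk hu) hheight
  have hA : ∀ x ∈ crossingSet Q, x + u ∉ crossingSet Q := fun x hx hxu => by
    obtain ⟨s, hs⟩ := exists_eq_of_mem_crossingSet hadj hx
    obtain ⟨t, ht⟩ := exists_eq_of_mem_crossingSet hadj hxu
    exact hdisj t s (by rw [ht, hs])
  have hrow := finite_row_crossingSet htop hbot
  have hne := crossingSet_nonempty htop hbot
  obtain ⟨x, hx, hleft⟩ := exists_mem_add_lt_of_periodic hk one_ne_zero hrow hne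
    (fun _ => sub_mem_crossingSet hper) hA
  obtain ⟨y, hy, hright⟩ := exists_mem_add_lt_of_periodic hk (neg_ne_zero.2 one_ne_zero) hrow hne
    (fun _ => sub_mem_crossingSet hper) hA
  obtain ⟨s, rfl⟩ := exists_eq_of_mem_crossingSet hadj hx
  obtain ⟨t, rfl⟩ := exists_eq_of_mem_crossingSet hadj hy
  have h1 : rayCrossing Q (Q s + u) = 1 :=
    rayCrossing_eq_one htop hbot fun c hc => by rw [Prod.fst_add]; linarith [hleft c hc]
  have h0 : rayCrossing Q (Q t + u) = 0 :=
    rayCrossing_eq_zero fun c hc => by rw [Prod.fst_add]; linarith [hright c hc]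
  have := (rayCrossing_add_eq htop hbot hadj hdisj s).trans
    (rayCrossing_add_eq htop hbot hadj hdisj t).symm
  omega

theorem exists_eq_add_of_periodic_of_snd_ne_zero {Q : ℤ → ℤ × ℤ} {M k : ℤ} {u : ℤ × ℤ}
    (hM : 0 < M) (hk : 0 < k) (hu : u.2 ≠ 0) (hadj : ∀ t, gridAdj (Q t) (Q (t + 1)))
    (hper : ∀ t, Q (t + M) = Q t + k • u) : ∃ s t, Q s = Q t + u := by
  rcases hu.lt_or_gt with hneg | hpos
  · obtain ⟨s, t, h⟩ := exists_eq_add_of_periodic_of_snd_pos (Q := fun t => -Q t) (u := -u) hM hk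
      (by simpa) (fun t => gridAdj_neg.2 (hadj t)) (fun t => by rw [hper, smul_neg, neg_add])
    rw [← neg_add, neg_inj] at h
    exact ⟨s, t, h⟩
  · exact exists_eq_add_of_periodic_of_snd_pos hM hk hpos hadj hper

theorem exists_eq_add_of_periodic {Q : ℤ → ℤ × ℤ} {M k : ℤ} {u : ℤ × ℤ} (hM : 0 < M) (hk : 0 < k)
    (hu : u ≠ 0) (hadj : ∀ t, gridAdj (Q t) (Q (t + 1))) (hper : ∀ t, Q (t + M) = Q t + k • u) :
    ∃ s t, Q s = Q t + u := by
  by_cases hu₂ : u.2 = 0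
  · obtain ⟨s, t, h⟩ := exists_eq_add_of_periodic_of_snd_ne_zero (Q := fun t => (Q t).swap)
      (u := u.swap) hM hk (fun hu₁ => hu (Prod.ext hu₁ hu₂)) (fun t => gridAdj_swap.2 (hadj t))
      (fun t => by rw [hper, Prod.swap_add, Prod.smul_swap])
    rw [← Prod.swap_add] at h
    exact ⟨s, t, Prod.swap_injective h⟩
  · exact exists_eq_add_of_periodic_of_snd_ne_zero hM hk hu₂ hadj hper

def periodicExtension (f : ℕ → ℤ × ℤ) (L : ℕ) (t : ℤ) : ℤ × ℤ :=
  f (t % L).toNat + (t / L) • (f L - f 0)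

section PeriodicExtension

variable {f : ℕ → ℤ × ℤ} {L : ℕ}

lemma exists_eq_mul_add (hL : 0 < L) (t : ℤ) : ∃ (c : ℤ) (r : ℕ), r < L ∧ t = c * L + r := by
  have h0 := Int.emod_nonneg t (by omega : (L : ℤ) ≠ 0)
  have h1 := Int.emod_lt_of_pos t (by omega : (0 : ℤ) < L)
  have h2 := Int.ediv_mul_add_emod t L
  exact ⟨t / L, (t % L).toNat, by omega, by omega⟩

lemma periodicExtension_mul_add (hL : 0 < L) (c : ℤ) {r : ℕ} (hr : r ≤ L) :
    periodicExtension f L (c * L + r) = f r + c • (f L - f 0) := by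
  rcases hr.lt_or_eq with hr | hr
  · obtain ⟨hdiv, hmod⟩ : (c * L + r) / L = c ∧ (c * L + r) % L = r :=
      (Int.ediv_emod_unique (by omega)).2 ⟨by ring, by omega, by omega⟩
    simp [periodicExtension, hdiv, hmod]
  · subst r
    obtain ⟨hdiv, hmod⟩ : (c * L + L) / L = c + 1 ∧ (c * L + L) % L = 0 :=
      (Int.ediv_emod_unique (by omega)).2 ⟨by ring, le_rfl, by omega⟩
    simp only [periodicExtension, hdiv, hmod, Int.toNat_zero]
    module

lemma periodicExtension_gridAdj (hL : 0 < L) (hadj : ∀ i < L, gridAdj (f i) (f (i + 1)))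
    (t : ℤ) : gridAdj (periodicExtension f L t) (periodicExtension f L (t + 1)) := by
  obtain ⟨c, r, hr, rfl⟩ := exists_eq_mul_add hL t
  rw [periodicExtension_mul_add hL c hr.le, add_assoc, ← Nat.cast_add_one,
    periodicExtension_mul_add hL c hr]
  exact (gridAdj_add_right _).2 (hadj r hr)

lemma periodicExtension_add (hL : 0 < L) (t : ℤ) :
    periodicExtension f L (t + L) = periodicExtension f L t + (f L - f 0) := by
  obtain ⟨c, r, hr, rfl⟩ := exists_eq_mul_add hL t
  rw [show c * L + r + L = (c + 1) * L + r by ring, periodicExtension_mul_add hL _ hr.le,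
    periodicExtension_mul_add hL _ hr.le]
  module

lemma periodicExtension_sub (hL : 0 < L) (s t : ℤ) : ∃ i < L, ∃ j < L, ∃ m : ℤ,
    periodicExtension f L s - periodicExtension f L t = f i - f j + m • (f L - f 0) := by
  obtain ⟨c, i, hi, rfl⟩ := exists_eq_mul_add hL s
  obtain ⟨c', j, hj, rfl⟩ := exists_eq_mul_add hL t
  refine ⟨i, hi, j, hj, c - c', ?_⟩
  rw [periodicExtension_mul_add hL _ hi.le, periodicExtension_mul_add hL _ hj.le]
  module

end PeriodicExtension

theorem exists_sub_eq_zsmul_of_path {f : ℕ → ℤ × ℤ} {L : ℕ} {k : ℤ} {u : ℤ × ℤ} (hu : u ≠ 0)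
    (hk : 2 ≤ k) (hadj : ∀ i < L, gridAdj (f i) (f (i + 1))) (hfL : f L - f 0 = k • u) :
    ∃ i < L, ∃ j < L, ∃ z : ℤ, z ≠ 0 ∧ f i - f j = z • u := by
  have hL : 0 < L := Nat.pos_of_ne_zero fun hL => by
    subst hL
    exact hu ((smul_eq_zero.1 (sub_self (f 0) ▸ hfL).symm).resolve_left (by omega))
  obtain ⟨s, t, h⟩ := exists_eq_add_of_periodic (Q := periodicExtension f L) (M := L) (k := k)
    (by omega) (by omega) hu (periodicExtension_gridAdj hL hadj)
    (fun t => by rw [periodicExtension_add hL, hfL])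
  obtain ⟨i, hi, j, hj, m, hst⟩ := periodicExtension_sub (f := f) hL s t
  refine ⟨i, hi, j, hj, 1 - m * k, fun hmk => ?_, ?_⟩
  · have := Int.eq_one_of_mul_eq_one_left (by omega) (by linarith : m * k = 1)
    omega
  · rw [eq_sub_of_add_eq hst.symm, h, hfL]
    module

theorem path_endpoints_sub_ne_zsmul {u : ℤ × ℤ} (hu : u ≠ 0) (L : ℕ) (f : ℕ → ℤ × ℤ)
    (hadj : ∀ i < L, gridAdj (f i) (f (i + 1))) (hchord : ∀ i ≤ L, ∀ j ≤ L, f i - f j ≠ u)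
    {z : ℤ} (hz : z ≠ 0) : f L - f 0 ≠ z • u := by
  induction L using Nat.strong_induction_on generalizing f z with
  | _ L ih =>
  intro hfL
  have hsub : ∀ i j, i ≤ j → j < L → ∀ w : ℤ, w ≠ 0 → f j - f i ≠ w • u := by
    intro i j hij hj w hw0 hw
    rcases hij.lt_or_eq with hij | rfl
    · refine ih (j - i) (by omega) (fun n => f (i + n)) (fun n hn => ?_)
        (fun a ha b hb => hchord _ (by omega) _ (by omega)) hw0
        (by simpa [Nat.add_sub_cancel' hij.le])
      rw [← add_assoc]
      exact hadj _ (by omega)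
    · exact hw0 ((smul_eq_zero.1 (sub_self (f i) ▸ hw).symm).resolve_right hu)
  have htaut : ∀ i < L, ∀ j < L, ∀ w : ℤ, w ≠ 0 → f i - f j ≠ w • u := by
    intro i hi j hj w hw0 hw
    rcases le_total j i with hji | hij
    · exact hsub j i hji hi w hw0 hw
    · exact hsub i j hij hj (-w) (neg_ne_zero.2 hw0) (by rw [neg_smul, ← hw, neg_sub])
  have h1 : z ≠ 1 := by
    rintro rfl
    exact hchord L le_rfl 0 (by omega) (by rw [hfL, one_smul])
  have h2 : z ≠ -1 := by
    rintro rfl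
    exact hchord 0 (by omega) L le_rfl (by rw [← neg_sub, hfL, neg_smul, one_smul, neg_neg])
  rcases lt_or_gt_of_ne hz with hneg | hpos
  · obtain ⟨i, hi, j, hj, w, hw0, hw⟩ := exists_sub_eq_zsmul_of_path (k := -z) (neg_ne_zero.2 hu)
      (by omega) hadj (by rw [hfL, neg_smul_neg])
    exact htaut i hi j hj (-w) (neg_ne_zero.2 hw0) (by rw [hw, neg_smul, smul_neg])
  · obtain ⟨i, hi, j, hj, w, hw0, hw⟩ := exists_sub_eq_zsmul_of_path hu (by omega) hadj hfL
    exact htaut i hi j hj w hw0 hw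

lemma Relation.ReflTransGen.exists_seq {α : Type*} {r : α → α → Prop} {a b : α}
    (h : Relation.ReflTransGen r a b) :
    ∃ (L : ℕ) (f : ℕ → α), f 0 = a ∧ f L = b ∧ ∀ i < L, r (f i) (f (i + 1)) := by
  induction h with
  | refl => exact ⟨0, fun _ => a, rfl, rfl, by simp⟩
  | @tail c d _ hcd ih =>
    obtain ⟨L, f, hf0, hfL, hf⟩ := ih
    refine ⟨L + 1, fun i => if i ≤ L then f i else d, by simp [hf0], by simp, fun i hi => ?_⟩
    rcases (Nat.lt_succ_iff.1 hi).lt_or_eq with hi | rfl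
    · simpa [hi.le, Nat.succ_le_of_lt hi] using hf i hi
    · simpa [hfL] using hcd

/-- Discrete universal chord theorem: if a finite connected subgraph of the grid graph on
`ℤ²` realises `n • u` for a positive integer `n`, then it realises `u`. -/
theorem discrete_universal_chord (S : Finset (ℤ × ℤ)) (hconn : connectedIn S)
    (u : ℤ × ℤ) (n : ℕ) (hn : 0 < n) (h : realises S ((n : ℤ) • u)) :
    realises S u := by
  obtain ⟨a, ha, b, hb, hab⟩ := h
  by_cases hu : u = 0
  · exact ⟨a, ha, a, ha, by rw [hu, sub_self]⟩
  by_contra hno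
  obtain ⟨L, f, rfl, hfL, hf⟩ := (hconn b hb a ha).exists_seq
  have hmem : ∀ i ≤ L, f i ∈ S := fun i hi => by
    rcases hi.lt_or_eq with hi | rfl
    · exact (hf i hi).1
    · exact hfL ▸ ha
  refine path_endpoints_sub_ne_zsmul hu L f (fun i hi => (hf i hi).2.2)
    (fun i hi j hj hij => hno ⟨f i, hmem i hi, f j, hmem j hj, hij⟩) (z := n) (by omega) ?_
  rw [hfL, hab]
end
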